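/- arXiv:2601.12302 — 2 statements merged into one kernel-verified Lean document; each statement's English description precedes it below -/
import Mathlib

section
/- For all integers t ≥ 0, r ≥ 1 and n ≥ t, θ_{t,r}(n) ≤ (n)_t · ( 1/1! + (n−t)/2! + (n−t)²/3! + ⋯ + (n−t)^{r−1}/r! )^t, where the right-hand side is interpreted as a real number. -/
/-- `θ_{t,r}(n)`: the number of labellings `f : {1,…,n} → {0,1,…,t}` such that every
nonzero label is used at least once and at most `r` times. -/
def theta (t r n : ℕ) : ℕ :=
  Finset.card (Finset.univ.filter fun f : Fin n → Fin (t + 1) =>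
    ∀ ℓ : Fin (t + 1), ℓ.val ≠ 0 →
      1 ≤ (Finset.univ.filter fun j : Fin n => f j = ℓ).card ∧
      (Finset.univ.filter fun j : Fin n => f j = ℓ).card ≤ r)

open Finset

variable {α β : Type} [Fintype α] [DecidableEq α] [Fintype β] [DecidableEq β]

/-- theta for an arbitrary ground type. -/
def thetaT (t r : ℕ) (α : Type) [Fintype α] [DecidableEq α] : ℕ :=
  (Finset.univ.filter fun f : α → Fin (t + 1) =>
    ∀ ℓ : Fin (t + 1), ℓ.val ≠ 0 →
      1 ≤ (Finset.univ.filter fun j : α => f j = ℓ).card ∧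
      (Finset.univ.filter fun j : α => f j = ℓ).card ≤ r).card


lemma card_filter_subtype (s : Finset α) (p : α → Prop) [DecidablePred p]
    (h : ∀ a, p a → a ∈ s) :
    (Finset.univ.filter fun x : ↥s => p ↑x).card = (Finset.univ.filter p).card := by
  refine Finset.card_bij' (fun (x : ↥s) _ => (x : α)) (fun a ha => ⟨a, h a (by simpa using ha)⟩)
    ?_ ?_ ?_ ?_
  · intro a ha; simpa using (Finset.mem_filter.mp ha).2
  · intro a ha; simpa using (Finset.mem_filter.mp ha).2
  · intro a ha; rfl
  · intro a ha; rfl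

lemma fiber_card_congr (e : α ≃ β) (f : α → γ) [DecidableEq γ] (ℓ : γ) :
    (Finset.univ.filter fun j : β => f (e.symm j) = ℓ).card
      = (Finset.univ.filter fun j : α => f j = ℓ).card := by
  rw [← Fintype.card_subtype, ← Fintype.card_subtype]
  exact (Fintype.card_congr (e.subtypeEquiv (fun a => by simp))).symm

lemma thetaT_congr (t r : ℕ) (e : α ≃ β) : thetaT t r α = thetaT t r β := by
  unfold thetaT
  refine Finset.card_bij' (fun f _ => f ∘ e.symm) (fun g _ => g ∘ e) ?_ ?_ ?_ ?_
  · intro f hf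
    simp only [Finset.mem_filter, Finset.mem_univ, true_and] at hf ⊢
    intro ℓ hℓ
    simpa [Function.comp, fiber_card_congr e f ℓ] using hf ℓ hℓ
  · intro g hg
    simp only [Finset.mem_filter, Finset.mem_univ, true_and] at hg ⊢
    intro ℓ hℓ
    have := fiber_card_congr e (fun a => g (e a)) ℓ
    simp only [Equiv.apply_symm_apply] at this
    simp only [Function.comp]
    rw [← this]
    exact hg ℓ hℓ
  · intro f _; funext x; simp
  · intro g _; funext x; simp

lemma thetaT_eq_zero {t r : ℕ} (h : Fintype.card α < t) : thetaT t r α = 0 := by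
  unfold thetaT
  rw [Finset.card_eq_zero, Finset.filter_eq_empty_iff]
  intro f _ hf
  have hsum : ∑ ℓ : Fin (t + 1), (Finset.univ.filter fun j : α => f j = ℓ).card
      = Fintype.card α := by
    rw [← Finset.card_univ]
    exact (Finset.card_eq_sum_card_fiberwise (fun x _ => Finset.mem_univ (f x))).symm
  have h1 : ∑ ℓ ∈ (Finset.univ : Finset (Fin (t+1))).erase 0, 1
      ≤ ∑ ℓ ∈ (Finset.univ : Finset (Fin (t+1))).erase 0,
          (Finset.univ.filter fun j : α => f j = ℓ).card := by
    apply Finset.sum_le_sum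
    intro ℓ hℓ
    exact (hf ℓ (by intro h0; exact (Finset.mem_erase.mp hℓ).1 (Fin.ext (by simp [h0])))).1
  have h2 : ∑ ℓ ∈ (Finset.univ : Finset (Fin (t+1))).erase 0,
        (Finset.univ.filter fun j : α => f j = ℓ).card
      ≤ ∑ ℓ : Fin (t + 1), (Finset.univ.filter fun j : α => f j = ℓ).card :=
    Finset.sum_le_sum_of_subset (Finset.erase_subset _ _)
  simp only [Finset.sum_const, smul_eq_mul, mul_one, Finset.card_erase_of_mem (Finset.mem_univ _),
    Finset.card_univ, Fintype.card_fin] at h1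
  omega

lemma thetaT_zero (r : ℕ) : thetaT 0 r α = 1 := by
  unfold thetaT
  rw [Finset.filter_true_of_mem]
  · simp
  · intro f _ ℓ hℓ
    exact absurd (Fin.val_eq_zero ℓ) hℓ

lemma card_filter_fiber (t r : ℕ) (S : Finset α) (h1 : 1 ≤ S.card) (h2 : S.card ≤ r) :
    ((Finset.univ.filter fun f : α → Fin (t + 2) =>
        ∀ ℓ : Fin (t + 2), ℓ.val ≠ 0 →
          1 ≤ (Finset.univ.filter fun j : α => f j = ℓ).card ∧
          (Finset.univ.filter fun j : α => f j = ℓ).card ≤ r).filter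
      fun f => (Finset.univ.filter fun j : α => f j = Fin.last (t + 1)) = S).card
    = thetaT t r ↥(Sᶜ : Finset α) := by
  unfold thetaT
  refine Finset.card_bij'
    (fun f hf => fun x : ↥(Sᶜ : Finset α) => (f ↑x).castPred (by
      have hS := (Finset.mem_filter.mp hf).2
      intro hlast
      have hmem : (x : α) ∈ Finset.univ.filter (fun j => f j = Fin.last (t + 1)) := by
        simp [hlast]
      rw [hS] at hmem
      exact absurd hmem (Finset.mem_compl.mp x.2)))
    (fun g _ => fun a : α =>
      if ha : a ∈ S then Fin.last (t + 1) else (g ⟨a, Finset.mem_compl.mpr ha⟩).castSucc)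
    ?_ ?_ ?_ ?_
  · -- i maps into target
    intro f hf
    obtain ⟨hf1, hS⟩ := Finset.mem_filter.mp hf
    have hP := (Finset.mem_filter.mp hf1).2
    simp only [Finset.mem_filter, Finset.mem_univ, true_and]
    intro ℓ hℓ
    simp only [Fin.castPred_eq_iff_eq_castSucc]
    rw [card_filter_subtype (Sᶜ : Finset α) (fun a => f a = ℓ.castSucc) ?side]
    case side =>
      intro a ha
      apply Finset.mem_compl.mpr
      intro haS
      rw [← hS] at haS
      have := (Finset.mem_filter.mp haS).2
      rw [ha] at this
      exact absurd this (Fin.castSucc_lt_last ℓ).ne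
    exact hP ℓ.castSucc (by simpa using hℓ)
  · -- j maps into source
    intro g hg
    have hP := (Finset.mem_filter.mp hg).2
    have hfib : (Finset.univ.filter fun a : α =>
        (if ha : a ∈ S then Fin.last (t + 1)
          else (g ⟨a, Finset.mem_compl.mpr ha⟩).castSucc) = Fin.last (t + 1)) = S := by
      ext a
      by_cases ha : a ∈ S
      · simp [ha]
      · simp [ha, (Fin.castSucc_lt_last _).ne]
    rw [Finset.mem_filter]
    refine ⟨Finset.mem_filter.mpr ⟨Finset.mem_univ _, ?_⟩, hfib⟩
    intro ℓ' hℓ'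
    induction ℓ' using Fin.lastCases with
    | last =>
      rw [hfib]
      exact ⟨h1, h2⟩
    | cast ℓ =>
      have hside : ∀ a : α, ((if ha : a ∈ S then Fin.last (t + 1)
          else (g ⟨a, Finset.mem_compl.mpr ha⟩).castSucc) = ℓ.castSucc) → a ∈ (Sᶜ : Finset α) := by
        intro a ha
        apply Finset.mem_compl.mpr
        intro haS
        rw [dif_pos haS] at ha
        exact absurd ha.symm (Fin.castSucc_lt_last ℓ).ne
      rw [← card_filter_subtype (Sᶜ : Finset α) _ hside]
      have hcongr : (Finset.univ.filter fun x : ↥(Sᶜ : Finset α) =>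
            (if ha : (x : α) ∈ S then Fin.last (t + 1)
              else (g ⟨(x : α), Finset.mem_compl.mpr ha⟩).castSucc) = ℓ.castSucc)
          = (Finset.univ.filter fun x : ↥(Sᶜ : Finset α) => g x = ℓ) := by
        apply Finset.filter_congr
        intro x _
        rw [dif_neg (Finset.mem_compl.mp x.2)]
        simp [Fin.castSucc_inj]
      rw [hcongr]
      exact hP ℓ (by simpa using hℓ')
  · -- left inverse
    intro f hf
    obtain ⟨_, hS⟩ := Finset.mem_filter.mp hf
    funext a
    by_cases ha : a ∈ S
    · simp only [dif_pos ha]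
      rw [← hS] at ha
      exact ((Finset.mem_filter.mp ha).2).symm
    · simp only [dif_neg ha]
      exact Fin.castSucc_castPred _ _
  · -- right inverse
    intro g hg
    funext x
    have hx : (x : α) ∉ S := Finset.mem_compl.mp x.2
    simp only [dif_neg hx]
    exact Fin.castPred_castSucc _


lemma theta_eq_thetaT (t r n : ℕ) : theta t r n = thetaT t r (Fin n) := rfl

lemma thetaT_eq_theta (t r : ℕ) : thetaT t r α = theta t r (Fintype.card α) := by
  rw [theta_eq_thetaT]
  exact thetaT_congr t r (Fintype.equivFin α)

lemma theta_succ (t r n : ℕ) :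
    theta (t + 1) r n = ∑ k ∈ Finset.Icc 1 r, n.choose k * theta t r (n - k) := by
  rw [theta_eq_thetaT]
  unfold thetaT
  have H : ∀ f ∈ (Finset.univ.filter fun f : Fin n → Fin (t + 2) =>
        ∀ ℓ : Fin (t + 2), ℓ.val ≠ 0 →
          1 ≤ (Finset.univ.filter fun j => f j = ℓ).card ∧
          (Finset.univ.filter fun j => f j = ℓ).card ≤ r),
      (Finset.univ.filter fun j => f j = Fin.last (t + 1))
        ∈ (Finset.Icc 1 r).biUnion fun k => Finset.powersetCard k Finset.univ := by
    intro f hf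
    have hP := (Finset.mem_filter.mp hf).2
    have hlast := hP (Fin.last (t + 1)) (by simp [Fin.val_last])
    rw [Finset.mem_biUnion]
    exact ⟨_, Finset.mem_Icc.mpr ⟨hlast.1, hlast.2⟩,
      Finset.mem_powersetCard.mpr ⟨Finset.subset_univ _, rfl⟩⟩
  rw [Finset.card_eq_sum_card_fiberwise H]
  rw [Finset.sum_biUnion (by
    intro x hx y hy hxy
    simp only [Finset.disjoint_left, Finset.mem_powersetCard]
    rintro S ⟨-, h1⟩ ⟨-, h2⟩
    exact hxy (h1 ▸ h2))]
  apply Finset.sum_congr rfl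
  intro k hk
  obtain ⟨hk1, hk2⟩ := Finset.mem_Icc.mp hk
  have : ∀ S ∈ Finset.powersetCard k (Finset.univ : Finset (Fin n)),
      ((Finset.univ.filter fun f : Fin n → Fin (t + 2) =>
        ∀ ℓ : Fin (t + 2), ℓ.val ≠ 0 →
          1 ≤ (Finset.univ.filter fun j => f j = ℓ).card ∧
          (Finset.univ.filter fun j => f j = ℓ).card ≤ r).filter
        fun f => (Finset.univ.filter fun j => f j = Fin.last (t + 1)) = S).card
      = theta t r (n - k) := by
    intro S hS
    obtain ⟨-, hcard⟩ := Finset.mem_powersetCard.mp hS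
    rw [card_filter_fiber t r S (hcard ▸ hk1) (hcard ▸ hk2), thetaT_eq_theta]
    congr 1
    rw [Fintype.card_coe, Finset.card_compl, hcard, Fintype.card_fin]
  rw [Finset.sum_congr rfl this, Finset.sum_const, Finset.card_powersetCard,
    Finset.card_univ, Fintype.card_fin, smul_eq_mul]

lemma theta_zero (r n : ℕ) : theta 0 r n = 1 := by
  rw [theta_eq_thetaT]; exact thetaT_zero r

lemma theta_eq_zero_of_lt {t r n : ℕ} (h : n < t) : theta t r n = 0 := by
  rw [theta_eq_thetaT]; exact thetaT_eq_zero (by simpa using h)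

/-- For `t ≥ 0`, `r ≥ 1` and `n ≥ t`:
`θ_{t,r}(n) ≤ (n)_t · (1/1! + (n−t)/2! + ⋯ + (n−t)^{r−1}/r!)^t` (as reals). -/
theorem theta_upper_bound_sum (n t r : ℕ) (hr : 1 ≤ r) (h : t ≤ n) :
    (theta t r n : ℝ) ≤
      (Nat.descFactorial n t : ℝ) *
        (∑ j ∈ Finset.range r,
            ((n : ℝ) - (t : ℝ)) ^ j / ((j + 1).factorial : ℝ)) ^ t := by
  induction t generalizing n with
  | zero => simp [theta_zero]
  | succ t ih =>
    set x : ℝ := (n : ℝ) - ((t + 1 : ℕ) : ℝ) with hxdef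
    set M : ℝ := ∑ j ∈ Finset.range r, x ^ j / ((j + 1).factorial : ℝ) with hMdef
    have hx0 : (0 : ℝ) ≤ x := by
      rw [hxdef, sub_nonneg]; exact_mod_cast h
    have hM0 : 0 ≤ M := by
      rw [hMdef]
      apply Finset.sum_nonneg
      intro j _
      positivity
    have key : ∀ k ∈ Finset.Icc 1 r,
        ((n.choose k : ℝ) * (theta t r (n - k) : ℝ)) ≤
          (n.descFactorial (t + 1) : ℝ) * (x ^ (k - 1) / (k.factorial : ℝ)) * M ^ t := by
      intro k hk
      obtain ⟨hk1, hk2⟩ := Finset.mem_Icc.mp hk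
      have hRHS0 : 0 ≤ (n.descFactorial (t + 1) : ℝ) * (x ^ (k - 1) / (k.factorial : ℝ)) * M ^ t := by
        positivity
      by_cases hkn : k ≤ n
      · by_cases htnk : t ≤ n - k
        · -- main case
          have hIH := ih (n - k) htnk
          have hcast : ((n - k : ℕ) : ℝ) = (n : ℝ) - (k : ℝ) := Nat.cast_sub hkn
          have hMM : (∑ j ∈ Finset.range r,
                (((n - k : ℕ) : ℝ) - (t : ℝ)) ^ j / ((j + 1).factorial : ℝ)) ≤ M := by
            rw [hMdef]
            apply Finset.sum_le_sum
            intro j _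
            gcongr
            · rw [hcast, sub_nonneg]
              have h2 : (t + k : ℕ) ≤ n := by omega
              have h3 := Nat.cast_le (α := ℝ).mpr h2
              push_cast at h3
              linarith
            · rw [hcast, hxdef]
              push_cast
              have : (1 : ℝ) ≤ (k : ℝ) := by exact_mod_cast hk1
              linarith
          have hM'0 : 0 ≤ (∑ j ∈ Finset.range r,
                (((n - k : ℕ) : ℝ) - (t : ℝ)) ^ j / ((j + 1).factorial : ℝ)) := by
            apply Finset.sum_nonneg
            intro j _
            have : (0:ℝ) ≤ ((n - k : ℕ) : ℝ) - (t : ℝ) := by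
              rw [sub_nonneg]; exact_mod_cast htnk
            positivity
          have step1 : ((n.choose k : ℝ) * (theta t r (n - k) : ℝ)) ≤
              (n.choose k : ℝ) * (((n - k).descFactorial t : ℝ) * M ^ t) := by
            apply mul_le_mul_of_nonneg_left _ (by positivity)
            calc (theta t r (n - k) : ℝ) ≤ _ := hIH
              _ ≤ ((n - k).descFactorial t : ℝ) * M ^ t := by
                  apply mul_le_mul_of_nonneg_left _ (by positivity)
                  exact pow_le_pow_left₀ hM'0 hMM t
          have hfacpos : (0 : ℝ) < (k.factorial : ℝ) := by
            exact_mod_cast k.factorial_pos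
          have hA : ((n - k).descFactorial t : ℕ) * (k.factorial * n.choose k)
              = n.descFactorial (k + t) := by
            rw [← Nat.descFactorial_eq_factorial_mul_choose]
            have h4 := Nat.descFactorial_mul_descFactorial (n := n) (m := k + t) (k := k)
              (Nat.le_add_right k t)
            rwa [Nat.add_sub_cancel_left] at h4
          have hB : (n.descFactorial (k + t) : ℕ)
              ≤ (n - (t + 1)) ^ (k - 1) * n.descFactorial (t + 1) := by
            have hid := Nat.descFactorial_mul_descFactorial (n := n) (m := k + t) (k := t + 1)
              (by omega)
            rw [show k + t - (t + 1) = k - 1 by omega] at hid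
            calc n.descFactorial (k + t)
                = (n - (t + 1)).descFactorial (k - 1) * n.descFactorial (t + 1) := hid.symm
              _ ≤ (n - (t + 1)) ^ (k - 1) * n.descFactorial (t + 1) :=
                  Nat.mul_le_mul_right _ (Nat.descFactorial_le_pow _ _)
          have hcast2 : (((n - (t + 1) : ℕ)) : ℝ) = x := by
            rw [hxdef, Nat.cast_sub h]
          have hAreal : ((n - k).descFactorial t : ℝ) * ((k.factorial : ℝ) * (n.choose k : ℝ))
              = (n.descFactorial (k + t) : ℝ) := by exact_mod_cast congrArg (Nat.cast (R := ℝ)) hA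
          have hBreal : (n.descFactorial (k + t) : ℝ)
              ≤ x ^ (k - 1) * (n.descFactorial (t + 1) : ℝ) := by
            calc (n.descFactorial (k + t) : ℝ)
                ≤ (((n - (t + 1)) ^ (k - 1) * n.descFactorial (t + 1) : ℕ) : ℝ) := by
                  exact_mod_cast hB
              _ = x ^ (k - 1) * (n.descFactorial (t + 1) : ℝ) := by
                  push_cast [hcast2]; ring
          have step2 : (n.choose k : ℝ) * ((n - k).descFactorial t : ℝ)
              ≤ (n.descFactorial (t + 1) : ℝ) * (x ^ (k - 1) / (k.factorial : ℝ)) := by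
            rw [← mul_div_assoc, le_div_iff₀ hfacpos]
            calc (n.choose k : ℝ) * ((n - k).descFactorial t : ℝ) * (k.factorial : ℝ)
                = ((n - k).descFactorial t : ℝ) * ((k.factorial : ℝ) * (n.choose k : ℝ)) := by
                  ring
              _ = (n.descFactorial (k + t) : ℝ) := hAreal
              _ ≤ x ^ (k - 1) * (n.descFactorial (t + 1) : ℝ) := hBreal
              _ = (n.descFactorial (t + 1) : ℝ) * x ^ (k - 1) := by ring
          calc ((n.choose k : ℝ) * (theta t r (n - k) : ℝ))
              ≤ (n.choose k : ℝ) * (((n - k).descFactorial t : ℝ) * M ^ t) := step1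
            _ = ((n.choose k : ℝ) * ((n - k).descFactorial t : ℝ)) * M ^ t := by ring
            _ ≤ (n.descFactorial (t + 1) : ℝ) * (x ^ (k - 1) / (k.factorial : ℝ)) * M ^ t := by
                apply mul_le_mul_of_nonneg_right step2 (by positivity)
        · have hz : theta t r (n - k) = 0 := theta_eq_zero_of_lt (by omega)
          rw [hz]
          simpa using hRHS0
      · rw [Nat.choose_eq_zero_of_lt (by omega)]
        simpa using hRHS0
    have hsum : ∑ k ∈ Finset.Icc 1 r, x ^ (k - 1) / (k.factorial : ℝ) = M := by
      rw [hMdef]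
      refine Finset.sum_bij' (fun k _ => k - 1) (fun j _ => j + 1) ?_ ?_ ?_ ?_ ?_
      · intro k hk
        obtain ⟨h1, h2⟩ := Finset.mem_Icc.mp hk
        simp only [Finset.mem_range]; omega
      · intro j hj
        simp only [Finset.mem_range] at hj
        simp only [Finset.mem_Icc]
        omega
      · intro k hk
        obtain ⟨h1, -⟩ := Finset.mem_Icc.mp hk
        beta_reduce
        omega
      · intro j _
        beta_reduce
        omega
      · intro k hk
        obtain ⟨h1, -⟩ := Finset.mem_Icc.mp hk
        beta_reduce
        rw [show k - 1 + 1 = k by omega]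
    calc ((theta (t + 1) r n : ℝ))
        = ∑ k ∈ Finset.Icc 1 r, ((n.choose k : ℝ) * (theta t r (n - k) : ℝ)) := by
          rw [theta_succ]; push_cast; rfl
      _ ≤ ∑ k ∈ Finset.Icc 1 r,
            (n.descFactorial (t + 1) : ℝ) * (x ^ (k - 1) / (k.factorial : ℝ)) * M ^ t :=
          Finset.sum_le_sum key
      _ = (n.descFactorial (t + 1) : ℝ) * M ^ t *
            ∑ k ∈ Finset.Icc 1 r, x ^ (k - 1) / (k.factorial : ℝ) := by
          rw [Finset.mul_sum]; apply Finset.sum_congr rfl; intro k _; ring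
      _ = (n.descFactorial (t + 1) : ℝ) * M ^ (t + 1) := by
          rw [hsum, pow_succ]; ring
end

section
/- Suppose G is the generator matrix of an [n,k,t,r] functional batch code over 𝔽₂ with t ≥ 1 and n ≥ t + r. Then 2^k − 1 ≤ (n − (t−1)/2) · (n−t)^{r−1} / (r−1)!, where the right-hand side is interpreted as a real number. -/
/-- `G` is the generator matrix of an `[n,k,t,r]` functional batch code over `𝔽₂`:
for every `t`-tuple of nonzero vectors `α₁,…,α_t` in `𝔽₂^k` there exist pairwise
disjoint subsets `R₁,…,R_t` of the column index set, each of size at most `r`, such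
that each `α_ℓ` lies in the `𝔽₂`-linear span of the columns of `G` indexed by `R_ℓ`. -/
def IsFunctionalBatchCodeLoc (k n t r : ℕ) (G : Matrix (Fin k) (Fin n) (ZMod 2)) : Prop :=
  ∀ α : Fin t → Fin k → ZMod 2, (∀ ℓ, α ℓ ≠ 0) →
    ∃ R : Fin t → Finset (Fin n),
      (∀ ℓ₁ ℓ₂ : Fin t, ℓ₁ ≠ ℓ₂ → Disjoint (R ℓ₁) (R ℓ₂)) ∧
      (∀ ℓ : Fin t, (R ℓ).card ≤ r) ∧
      ∀ ℓ : Fin t,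
        α ℓ ∈ Submodule.span (ZMod 2) ((fun j i => G i j) '' (R ℓ : Set (Fin n)))

/-!
Request the same nonzero `α` from all `t` recovery sets. Over `𝔽₂` each recovery set contains a
nonempty set of columns summing to `α`; these `t` sets are disjoint, so by pigeonhole one of them
avoids the first `t - 1` columns. Hence every nonzero `α` is the sum of between `1` and `r` of the
last `n - t + 1` columns, so `2^k - 1 ≤ ∑_{i=1}^r C(n-t+1, i)`, and comparing consecutive terms
bounds this sum by `(n-t+1)(n-t)^(r-1)/(r-1)!`.
-/

open Finset Nat Function Matrix

lemma exists_subset_sum_eq_of_mem_span_image {ι M : Type*} [AddCommMonoid M] [Module (ZMod 2) M]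
    {f : ι → M} {R : Finset ι} {x : M} (hx : x ∈ Submodule.span (ZMod 2) (f '' R)) :
    ∃ S ⊆ R, ∑ j ∈ S, f j = x := by
  classical
  obtain ⟨c, rfl⟩ := (Submodule.mem_span_image_finset_iff_exists_fun' (ZMod 2)).mp hx
  refine ⟨R.filter (c · = 1), filter_subset _ _, ?_⟩
  rw [sum_filter]
  refine sum_congr rfl fun j _ => ?_
  generalize c j = a
  fin_cases a
  · exact (if_neg zero_ne_one).trans (zero_smul _ _).symm
  · exact (if_pos rfl).trans (one_smul _ _).symm

lemma exists_disjoint_of_card_lt {ι α : Type*} [Fintype ι] {S : ι → Finset α}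
    (hS : Pairwise (Disjoint on S)) {A : Finset α} (hA : #A < Fintype.card ι) :
    ∃ i, Disjoint (S i) A := by
  by_contra! h
  choose x hxS hxA using fun i => not_disjoint_iff.mp (h i)
  obtain ⟨i, -, j, -, hij, hx⟩ :=
    exists_ne_map_eq_of_card_lt_of_maps_to (s := univ) (by simpa using hA) fun i _ => hxA i
  exact disjoint_left.mp (hS hij) (hxS i) (hx ▸ hxS j)

lemma choose_succ_succ_le_mul_pow_div (m j : ℕ) :
    ((m + 1).choose (j + 1) : ℝ) ≤ (m + 1) * m ^ j / (j + 1)! := by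
  have hmul : ((m + 1).choose (j + 1) : ℝ) * (j + 1) = (m + 1) * m.choose j := by
    exact_mod_cast (add_one_mul_choose_eq m j).symm
  rw [factorial_succ, cast_mul, le_div_iff₀ (by positivity)]
  calc ((m + 1).choose (j + 1) : ℝ) * ((j + 1 : ℕ) * j !) = (m + 1) * (m.choose j * j !) := by
        push_cast; linear_combination (j ! : ℝ) * hmul
    _ ≤ (m + 1) * m ^ j := by
        gcongr
        exact (le_div_iff₀ (by positivity)).mp (choose_le_pow_div j m)

lemma sum_pow_div_factorial_succ_le {x : ℝ} {s : ℕ} (hx : (s : ℝ) + 1 ≤ x) :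
    ∑ j ∈ range (s + 1), x ^ j / (j + 1)! ≤ x ^ s / s ! := by
  induction s with
  | zero => simp
  | succ s ih =>
    push_cast at hx
    rw [sum_range_succ]
    have hx0 : 0 ≤ x := by linarith
    have hfac : ((s + 1 + 1)! : ℝ) = (s + 2) * (s + 1) * s ! := by
      push_cast [factorial_succ]; ring
    have hfac' : ((s + 1)! : ℝ) = (s + 1) * s ! := by push_cast [factorial_succ]; ring
    -- the new term and the old bound together fit under the next bound because `s + 2 ≤ x`
    have key : x ^ s / s ! + x ^ (s + 1) / (s + 1 + 1)! ≤ x ^ (s + 1) / (s + 1)! := by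
      have hc : 0 ≤ x ^ s / s ! := by positivity
      have hsplit : ∀ d : ℝ, x ^ (s + 1) / (d * s !) = x ^ s / s ! * (x / d) := fun d => by
        rw [pow_succ]; ring
      rw [hfac, hfac', hsplit, hsplit, ← mul_one_add]
      refine mul_le_mul_of_nonneg_left ?_ hc
      rw [one_add_div (by positivity), div_le_div_iff₀ (by positivity) (by positivity)]
      nlinarith [mul_nonneg (sq_nonneg ((s : ℝ) + 1)) (sub_nonneg.2 hx)]
    linarith [ih (by linarith)]

lemma sum_range_choose_succ_le {m r : ℕ} (h : r ≤ m) :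
    ∑ j ∈ range r, ((m + 1).choose (j + 1) : ℝ) ≤ (m + 1) * m ^ (r - 1) / (r - 1)! := by
  cases r with
  | zero => simp; positivity
  | succ s =>
    calc ∑ j ∈ range (s + 1), ((m + 1).choose (j + 1) : ℝ)
        ≤ ∑ j ∈ range (s + 1), (m + 1) * (m : ℝ) ^ j / (j + 1)! :=
          sum_le_sum fun j _ => choose_succ_succ_le_mul_pow_div m j
      _ = (m + 1) * ∑ j ∈ range (s + 1), (m : ℝ) ^ j / (j + 1)! := by
          rw [mul_sum]; simp only [mul_div_assoc]
      _ ≤ (m + 1) * m ^ (s + 1 - 1) / (s + 1 - 1)! := by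
          rw [add_tsub_cancel_right, mul_div_assoc]
          gcongr
          exact sum_pow_div_factorial_succ_le (by exact_mod_cast h)

namespace IsFunctionalBatchCodeLoc

variable {k n t r : ℕ} {G : Matrix (Fin k) (Fin n) (ZMod 2)}

lemma exists_sum_eq_of_ne_zero (hG : IsFunctionalBatchCodeLoc k n t r G) (ht : 1 ≤ t)
    (htn : t ≤ n) {α : Fin k → ZMod 2} (hα : α ≠ 0) :
    ∃ S ∈ (range r).biUnion fun j => (Ici (⟨t - 1, by omega⟩ : Fin n)).powersetCard (j + 1),
      ∑ j ∈ S, Gᵀ j = α := by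
  obtain ⟨R, hdisj, hcard, hspan⟩ := hG (fun _ => α) (fun _ => hα)
  choose S hSR hSα using fun ℓ => exists_subset_sum_eq_of_mem_span_image (hspan ℓ)
  obtain ⟨ℓ, hℓ⟩ := exists_disjoint_of_card_lt (S := S)
    (fun a b hab => (hdisj a b hab).mono (hSR a) (hSR b)) (A := Iio ⟨t - 1, by omega⟩)
    (by simp; omega)
  have hne : (S ℓ).Nonempty := nonempty_of_sum_ne_zero ((hSα ℓ).symm ▸ hα)
  refine ⟨S ℓ, mem_biUnion.2 ⟨#(S ℓ) - 1, ?_, mem_powersetCard.2 ⟨?_, ?_⟩⟩, hSα ℓ⟩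
  · have := (card_le_card (hSR ℓ)).trans (hcard ℓ)
    have := hne.card_pos
    rw [mem_range]; omega
  · exact fun j hj => mem_Ici.2 (not_lt.1 fun h => disjoint_left.1 hℓ hj (mem_Iio.2 h))
  · have := hne.card_pos
    omega

lemma two_pow_le_sum_choose_add_one (hG : IsFunctionalBatchCodeLoc k n t r G) (ht : 1 ≤ t)
    (htn : t ≤ n) :
    2 ^ k ≤ ∑ j ∈ range r, (n - t + 1).choose (j + 1) + 1 := by
  classical
  set 𝒮 := (range r).biUnion fun j => (Ici (⟨t - 1, by omega⟩ : Fin n)).powersetCard (j + 1)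
  have hcover :
      (univ : Finset (Fin k → ZMod 2)) ⊆ insert 0 (𝒮.image fun S => ∑ j ∈ S, Gᵀ j) := by
    intro α _
    rcases eq_or_ne α 0 with rfl | hα
    · exact mem_insert_self _ _
    · obtain ⟨S, hS, hSα⟩ := hG.exists_sum_eq_of_ne_zero ht htn hα
      exact mem_insert_of_mem (mem_image.2 ⟨S, hS, hSα⟩)
  calc 2 ^ k = #(univ : Finset (Fin k → ZMod 2)) := by simp
    _ ≤ #(𝒮.image fun S => ∑ j ∈ S, Gᵀ j) + 1 :=
        (card_le_card hcover).trans (card_insert_le _ _)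
    _ ≤ #𝒮 + 1 := by gcongr; exact card_image_le
    _ ≤ ∑ j ∈ range r, (n - t + 1).choose (j + 1) + 1 := by
        gcongr
        refine card_biUnion_le.trans (sum_le_sum fun j _ => ?_)
        rw [card_powersetCard, Fin.card_Ici, show n - (t - 1) = n - t + 1 by omega]

end IsFunctionalBatchCodeLoc

/-- If `G` generates an `[n,k,t,r]` functional batch code with `t ≥ 1` and
`n ≥ t + r`, then `2^k − 1 ≤ (n − (t−1)/2)·(n−t)^{r−1}/(r−1)!` (as reals). -/
theorem batch_code_bound_of_length (k n t r : ℕ) (ht : 1 ≤ t) (h : t + r ≤ n)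
    (G : Matrix (Fin k) (Fin n) (ZMod 2))
    (hG : IsFunctionalBatchCodeLoc k n t r G) :
    (2 : ℝ) ^ k - 1 ≤
      ((n : ℝ) - ((t : ℝ) - 1) / 2) * ((n : ℝ) - (t : ℝ)) ^ (r - 1) /
        ((r - 1).factorial : ℝ) := by
  have htn : t ≤ n := by omega
  have hcount : (2 : ℝ) ^ k ≤ ∑ j ∈ range r, ((n - t + 1).choose (j + 1) : ℝ) + 1 := by
    exact_mod_cast hG.two_pow_le_sum_choose_add_one ht htn
  have hm : ((n - t : ℕ) : ℝ) = n - t := cast_sub htn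
  have ht' : (1 : ℝ) ≤ t := by exact_mod_cast ht
  calc (2 : ℝ) ^ k - 1 ≤ ∑ j ∈ range r, ((n - t + 1).choose (j + 1) : ℝ) := by linarith
    _ ≤ ((n - t : ℕ) + 1) * ((n - t : ℕ) : ℝ) ^ (r - 1) / (r - 1)! :=
        sum_range_choose_succ_le (by omega)
    _ ≤ _ := by
        rw [hm]
        have htn' : (t : ℝ) ≤ n := by exact_mod_cast htn
        gcongr
        linarith
end
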